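/- Let U ∈ ℝ^{C×d}, g, g' ∈ (0,1)^C, h = (1/d)·D(g)·U·𝟏, h' = (1/d)·D(g')·U·𝟏, W, W' ∈ ℝ^{K×C}, ŷ = Wh, ŷ' = W'h', and let y be a label with margin m = ŷ_y − max_{k≠y} ŷ_k > 0. If ‖W'‖_2 · (‖g'−g‖_∞/√d) · ‖U‖_F + ‖W' − W‖_2 · ‖h‖_2 < m/2, then argmax_k ŷ'_k = y. -/

import Mathlib

open Matrix Finset

/-- Frobenius norm of a real matrix. -/
noncomputable def frob {C d : ℕ} (M : Matrix (Fin C) (Fin d) ℝ) : ℝ :=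
  Real.sqrt (∑ i, ∑ j, (M i j) ^ 2)

/-- Euclidean norm of a vector. -/
noncomputable def vnorm {C : ℕ} (v : Fin C → ℝ) : ℝ :=
  Real.sqrt (∑ i, (v i) ^ 2)

/-- Max-absolute-value (infinity) norm of a vector. -/
noncomputable def infNorm {C : ℕ} (v : Fin C → ℝ) : ℝ :=
  ⨆ i, |v i|

/-- Operator (spectral) norm of a matrix w.r.t. Euclidean norms. -/
noncomputable def opNorm {K C : ℕ} (A : Matrix (Fin K) (Fin C) ℝ) : ℝ :=
  ‖LinearMap.toContinuousLinearMap (Matrix.toEuclideanLin A)‖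

/-- Temporal average pooling: v = (1/d) · M · 𝟏. -/
noncomputable def pool {C d : ℕ} (M : Matrix (Fin C) (Fin d) ℝ) : Fin C → ℝ :=
  (1 / (d : ℝ)) • (M *ᵥ fun _ => (1 : ℝ))

lemma vnorm_eq_norm {n : ℕ} (v : Fin n → ℝ) :
    vnorm v = ‖(WithLp.equiv 2 (Fin n → ℝ)).symm v‖ := by
  rw [EuclideanSpace.norm_eq]
  simp [vnorm, sq_abs]

lemma vnorm_nonneg {n : ℕ} (v : Fin n → ℝ) : 0 ≤ vnorm v := Real.sqrt_nonneg _

lemma mulVec_vnorm_le {K C : ℕ} (A : Matrix (Fin K) (Fin C) ℝ) (v : Fin C → ℝ) :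
    vnorm (A *ᵥ v) ≤ opNorm A * vnorm v := by
  rw [vnorm_eq_norm, vnorm_eq_norm]
  have := (LinearMap.toContinuousLinearMap (Matrix.toEuclideanLin A)).le_opNorm
    ((WithLp.equiv 2 (Fin C → ℝ)).symm v)
  simpa [opNorm, Matrix.toEuclideanLin_toLp] using this

lemma abs_le_vnorm {n : ℕ} (v : Fin n → ℝ) (k : Fin n) : |v k| ≤ vnorm v := by
  rw [← Real.sqrt_sq_eq_abs]
  exact Real.sqrt_le_sqrt (Finset.single_le_sum (fun i _ => sq_nonneg (v i)) (mem_univ k))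

theorem stmt5 {C d K : ℕ} (hd : 0 < d) (hK : 2 ≤ K)
    (U : Matrix (Fin C) (Fin d) ℝ) (g g' : Fin C → ℝ)
    (hg : ∀ i, g i ∈ Set.Ioo (0 : ℝ) 1) (hg' : ∀ i, g' i ∈ Set.Ioo (0 : ℝ) 1)
    (W W' : Matrix (Fin K) (Fin C) ℝ)
    (h h' : Fin C → ℝ)
    (hh : h = pool (Matrix.diagonal g * U)) (hh' : h' = pool (Matrix.diagonal g' * U))
    (yhat yhat' : Fin K → ℝ)
    (hy : yhat = W *ᵥ h) (hy' : yhat' = W' *ᵥ h')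
    (y : Fin K) (m : ℝ)
    (hm : m = yhat y - ⨆ k : {k : Fin K // k ≠ y}, yhat (k : Fin K))
    (hmpos : 0 < m)
    (hcond : opNorm W' * (infNorm (g' - g) / Real.sqrt d) * frob U +
        opNorm (W' - W) * vnorm h < m / 2) :
    ∀ k : Fin K, k ≠ y → yhat' k < yhat' y := by
  set N : ℝ := infNorm (g' - g) with hN
  have hN0 : 0 ≤ N := Real.iSup_nonneg fun i => abs_nonneg _
  have hNle : ∀ i, |g' i - g i| ≤ N := fun i => by
    have := le_ciSup (f := fun i => |(g' - g) i|) (Finite.bddAbove_range _) i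
    simpa [infNorm, hN] using this
  have hdpos : (0 : ℝ) < d := by exact_mod_cast hd
  -- bound on vnorm (h' - h)
  have hdiff : ∀ i, (h' - h) i = (1 / (d : ℝ)) * ((g' i - g i) * ∑ j, U i j) := by
    intro i
    simp only [hh, hh', pool, Pi.sub_apply, Pi.smul_apply, smul_eq_mul, mulVec,
      dotProduct, Matrix.diagonal_mul, mul_one]
    rw [← Finset.mul_sum, ← Finset.mul_sum]
    ring
  have hsum : ∀ i, ((h' - h) i) ^ 2 ≤ N ^ 2 / d * ∑ j, (U i j) ^ 2 := by
    intro i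
    rw [hdiff i]
    have hCS : (∑ j, U i j) ^ 2 ≤ (d : ℝ) * ∑ j, (U i j) ^ 2 := by
      have := sq_sum_le_card_mul_sum_sq (s := (univ : Finset (Fin d))) (f := fun j => U i j)
      simpa using this
    have habs : (g' i - g i) ^ 2 ≤ N ^ 2 := by
      rw [← sq_abs]
      exact pow_le_pow_left₀ (abs_nonneg _) (hNle i) 2
    have : ((1 / (d : ℝ)) * ((g' i - g i) * ∑ j, U i j)) ^ 2
        = (1 / (d : ℝ)) ^ 2 * ((g' i - g i) ^ 2 * (∑ j, U i j) ^ 2) := by ring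
    rw [this]
    have h1 : (g' i - g i) ^ 2 * (∑ j, U i j) ^ 2 ≤ N ^ 2 * ((d : ℝ) * ∑ j, (U i j) ^ 2) :=
      mul_le_mul habs hCS (sq_nonneg _) (sq_nonneg _)
    calc (1 / (d : ℝ)) ^ 2 * ((g' i - g i) ^ 2 * (∑ j, U i j) ^ 2)
        ≤ (1 / (d : ℝ)) ^ 2 * (N ^ 2 * ((d : ℝ) * ∑ j, (U i j) ^ 2)) := by
          exact mul_le_mul_of_nonneg_left h1 (sq_nonneg _)
      _ = N ^ 2 / d * ∑ j, (U i j) ^ 2 := by field_simp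
  have hkey : vnorm (h' - h) ≤ N / Real.sqrt d * frob U := by
    have hsum' : ∑ i, ((h' - h) i) ^ 2 ≤ N ^ 2 / d * ∑ i, ∑ j, (U i j) ^ 2 := by
      rw [Finset.mul_sum]
      exact Finset.sum_le_sum fun i _ => hsum i
    have : vnorm (h' - h) ≤ Real.sqrt (N ^ 2 / d * ∑ i, ∑ j, (U i j) ^ 2) :=
      Real.sqrt_le_sqrt hsum'
    calc vnorm (h' - h) ≤ Real.sqrt (N ^ 2 / d * ∑ i, ∑ j, (U i j) ^ 2) := this
      _ = Real.sqrt (N ^ 2 / d) * frob U := by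
          rw [Real.sqrt_mul (by positivity)]; rfl
      _ = N / Real.sqrt d * frob U := by
          rw [Real.sqrt_div (sq_nonneg N), Real.sqrt_sq hN0]
  -- bound on the logit perturbation
  have hfrob0 : 0 ≤ frob U := Real.sqrt_nonneg _
  have hdec : ∀ k, yhat' k - yhat k = (W' *ᵥ (h' - h)) k + ((W' - W) *ᵥ h) k := by
    intro k
    simp only [hy, hy', Matrix.mulVec_sub, Matrix.sub_mulVec, Pi.sub_apply]
    ring
  have habs : ∀ k, |yhat' k - yhat k| < m / 2 := by
    intro k
    calc |yhat' k - yhat k| ≤ |(W' *ᵥ (h' - h)) k| + |((W' - W) *ᵥ h) k| := by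
          rw [hdec k]; exact abs_add_le _ _
      _ ≤ vnorm (W' *ᵥ (h' - h)) + vnorm ((W' - W) *ᵥ h) :=
          add_le_add (abs_le_vnorm _ _) (abs_le_vnorm _ _)
      _ ≤ opNorm W' * vnorm (h' - h) + opNorm (W' - W) * vnorm h :=
          add_le_add (mulVec_vnorm_le _ _) (mulVec_vnorm_le _ _)
      _ ≤ opNorm W' * (N / Real.sqrt d * frob U) + opNorm (W' - W) * vnorm h := by
          gcongr
          exact norm_nonneg _
      _ = opNorm W' * (N / Real.sqrt d) * frob U + opNorm (W' - W) * vnorm h := by ring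
      _ < m / 2 := hcond
  intro k hk
  have hsup : yhat k ≤ yhat y - m := by
    have : yhat k ≤ ⨆ k : {k : Fin K // k ≠ y}, yhat (k : Fin K) :=
      le_ciSup (f := fun k : {k : Fin K // k ≠ y} => yhat (k : Fin K))
        (Finite.bddAbove_range _) (⟨k, hk⟩ : {k : Fin K // k ≠ y})
    linarith [hm]
  have h1 := abs_lt.mp (habs k)
  have h2 := abs_lt.mp (habs y)
  linarith [h1.1, h1.2, h2.1, h2.2]
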